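/- Assume moreover that U+G < T. Then the set of strong Pareto optimal points of the attainable set S equals {(V_mu(s), V_un(P − s)) : s ∈ [0,P]}; that is, a point of S is strongly Pareto optimal if and only if it has the form (V_mu(s), V_un(P − s)) for some split s ∈ [0,P] of the total power between multicast (s) and unicast (P − s) transmission. -/

import Mathlib

open Finset

noncomputable section

/-- Effective estimation quality `ξ_{jk} = τ q_{jk}^{up} η_{jk}² / (1 + Σ_t τ q_{jt}^{up} η_{jt})`. -/
def xiX {G : ℕ} {K : Fin G → ℕ} (η : ∀ j : Fin G, Fin (K j) → ℝ)
    (τ : ℕ) (qup : ∀ j : Fin G, Fin (K j) → ℝ) (j : Fin G) (k : Fin (K j)) : ℝ :=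
  (τ : ℝ) * qup j k * (η j k) ^ 2 / (1 + ∑ t, (τ : ℝ) * qup j t * η j t)

/-- Effective estimation quality `θ_m = τ p_m^{up} β_m² / (1 + τ p_m^{up} β_m)`. -/
def thetaX {U : ℕ} (β : Fin U → ℝ) (τ : ℕ) (pup : Fin U → ℝ) (m : Fin U) : ℝ :=
  (τ : ℝ) * pup m * (β m) ^ 2 / (1 + (τ : ℝ) * pup m * β m)

/-- The multicast objective
`O_mu(x) = (1-τ/T) log₂(1 + min_{j,k} N q_j^{dl} ξ_{jk} / (1 + η_{jk}(P_un+P_mu)))`. -/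
def OmuX {U G : ℕ} {K : Fin G → ℕ} (N T : ℕ) (η : ∀ j : Fin G, Fin (K j) → ℝ)
    (τ : ℕ) (qup : ∀ j : Fin G, Fin (K j) → ℝ) (qdl : Fin G → ℝ) (pdl : Fin U → ℝ) : ℝ :=
  (1 - (τ : ℝ) / (T : ℝ)) * Real.logb 2 (1 + ⨅ j : Fin G, ⨅ k : Fin (K j),
    (N : ℝ) * qdl j * xiX η τ qup j k / (1 + η j k * (∑ m, pdl m + ∑ i, qdl i)))

/-- The unicast objective
`O_un(x) = (1-τ/T) Σ_m α_m log₂(1 + N p_m^{dl} θ_m / (1 + β_m (P_un+P_mu)))`. -/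
def OunX {U G : ℕ} (N T : ℕ) (β α : Fin U → ℝ)
    (τ : ℕ) (pup pdl : Fin U → ℝ) (qdl : Fin G → ℝ) : ℝ :=
  (1 - (τ : ℝ) / (T : ℝ)) * ∑ m, α m * Real.logb 2 (1 +
    (N : ℝ) * pdl m * thetaX β τ pup m / (1 + β m * (∑ u, pdl u + ∑ j, qdl j)))

/-- The feasible set (resource bundle) `X` of the multiobjective problem. -/
def feasX {U G : ℕ} {K : Fin G → ℕ} (T : ℕ) (P : ℝ)
    (Emu : ∀ j : Fin G, Fin (K j) → ℝ) (Eun : Fin U → ℝ) (τ : ℕ)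
    (qup : ∀ j : Fin G, Fin (K j) → ℝ) (qdl : Fin G → ℝ) (pup pdl : Fin U → ℝ) : Prop :=
  U + G ≤ τ ∧ τ ≤ T ∧
    (∀ j, 0 ≤ qdl j) ∧ (∀ m, 0 ≤ pdl m) ∧
    (∀ j k, 0 ≤ qup j k ∧ (τ : ℝ) * qup j k ≤ Emu j k) ∧
    (∀ m, 0 ≤ pup m ∧ (τ : ℝ) * pup m ≤ Eun m) ∧
    ∑ m, pdl m + ∑ j, qdl j ≤ P

/-- The attainable objective set `S = {(O_mu(x), O_un(x)) : x ∈ X} ⊆ ℝ²`. -/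
def attainS {U G : ℕ} {K : Fin G → ℕ} (N T : ℕ) (P : ℝ)
    (η Emu : ∀ j : Fin G, Fin (K j) → ℝ) (β Eun α : Fin U → ℝ) : Set (ℝ × ℝ) :=
  {y | ∃ (τ : ℕ) (qup : ∀ j : Fin G, Fin (K j) → ℝ) (qdl : Fin G → ℝ)
      (pup pdl : Fin U → ℝ),
    feasX T P Emu Eun τ qup qdl pup pdl ∧
    y = (OmuX N T η τ qup qdl pdl, OunX N T β α τ pup pdl qdl)}

/-- The multicast value function `V_mu(s)`: the best multicast objective when the
multicast downlink power is at most `s` and the unicast downlink power equals `P - s`. -/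
def VmuX {U G : ℕ} {K : Fin G → ℕ} (N T : ℕ) (P : ℝ)
    (η Emu : ∀ j : Fin G, Fin (K j) → ℝ) (β Eun α : Fin U → ℝ) (s : ℝ) : ℝ :=
  sSup {v : ℝ | ∃ (τ : ℕ) (qup : ∀ j : Fin G, Fin (K j) → ℝ) (qdl : Fin G → ℝ)
      (pup pdl : Fin U → ℝ),
    feasX T P Emu Eun τ qup qdl pup pdl ∧
    (∑ j, qdl j ≤ s) ∧ (∑ m, pdl m = P - s) ∧
    v = OmuX N T η τ qup qdl pdl}

/-- The unicast value function `V_un(s)`: the best unicast objective when the unicast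
downlink power is at most `s` and the multicast downlink power equals `P - s`. -/
def VunX {U G : ℕ} {K : Fin G → ℕ} (N T : ℕ) (P : ℝ)
    (η Emu : ∀ j : Fin G, Fin (K j) → ℝ) (β Eun α : Fin U → ℝ) (s : ℝ) : ℝ :=
  sSup {v : ℝ | ∃ (τ : ℕ) (qup : ∀ j : Fin G, Fin (K j) → ℝ) (qdl : Fin G → ℝ)
      (pup pdl : Fin U → ℝ),
    feasX T P Emu Eun τ qup qdl pup pdl ∧
    (∑ m, pdl m ≤ s) ∧ (∑ j, qdl j = P - s) ∧
    v = OunX N T β α τ pup pdl qdl}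

/-!
The objectives depend on the training length `τ` only through the prelog factor `1 - τ / T` and
the pilot energies `τ q^{up}`, `τ p^{up}`, so the shortest training `τ = U + G` is optimal; and
scaling all downlink powers by `c ≥ 1` increases every SINR `a p / (1 + b P_tot)`. Hence
`V_mu(s)` and `V_un(s)` are `1 - (U + G) / T` times maxima of continuous rates over compact sets,
the two maximizers for `s` and `P - s` combine into one feasible point (so the curve lies in `S`),
and scaling a feasible point up to full power shows that every point of `S` lies below the
curve. Scaling up the power split of a maximizer shows that `V_mu` and `V_un` are strictly
increasing when `U + G < T`, so the curve is an antichain; an antichain in `S` dominating `S` is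
exactly its set of maximal points.
-/

theorem IsAntichain.setOfPred_maximal_eq_of_forall_le {α : Type*} [PartialOrder α]
    {s t : Set α} (ht : IsAntichain (· ≤ ·) t) (hts : t ⊆ s) (hdom : ∀ x ∈ s, ∃ c ∈ t, x ≤ c) :
    {x | Maximal (· ∈ s) x} = t := by
  ext x
  refine ⟨fun hx => ?_, fun hx => ⟨hts hx, fun y hy hxy => ?_⟩⟩
  · obtain ⟨c, hc, hxc⟩ := hdom x hx.prop
    rwa [← hx.eq_of_ge (hts hc) hxc]
  · obtain ⟨c, hc, hyc⟩ := hdom y hy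
    rwa [ht.eq hx hc (hxy.trans hyc)]

theorem isAntichain_image_of_strictMonoOn_of_strictAntiOn {ι α β : Type*} [LinearOrder ι]
    [Preorder α] [Preorder β] {f : ι → α} {g : ι → β} {I : Set ι}
    (hf : StrictMonoOn f I) (hg : StrictAntiOn g I) :
    IsAntichain (· ≤ ·) ((fun i => (f i, g i)) '' I) := by
  rintro _ ⟨i, hi, rfl⟩ _ ⟨j, hj, rfl⟩ hne hle
  rcases lt_trichotomy i j with h | rfl | h
  · exact (hg hi hj h).not_ge hle.2
  · exact hne rfl
  · exact (hf hj hi h).not_ge hle.1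

theorem ContinuousOn.ciInf_apply {ι X α : Type*} [Fintype ι] [Nonempty ι] [TopologicalSpace X]
    [ConditionallyCompleteLattice α] [TopologicalSpace α] [ContinuousInf α]
    {f : ι → X → α} {s : Set X} (hf : ∀ i, ContinuousOn (f i) s) :
    ContinuousOn (fun x => ⨅ i, f i x) s := by
  simpa only [← Finset.inf'_univ_eq_ciInf] using
    ContinuousOn.finset_inf'_apply univ_nonempty fun i _ => hf i

theorem div_one_add_mul_le_mul_div_one_add_mul {a b c t t' : ℝ} (ha : 0 ≤ a) (hb : 0 ≤ b)
    (ht : 0 ≤ t) (ht' : 0 ≤ t') (hc : 1 ≤ c) (htt' : t' ≤ c * t) :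
    a / (1 + b * t) ≤ c * a / (1 + b * t') := by
  have hden : 1 + b * t' ≤ c * (1 + b * t) := by
    nlinarith [mul_le_mul_of_nonneg_left htt' hb]
  rw [div_le_div_iff₀ (by positivity) (by positivity)]
  nlinarith [mul_le_mul_of_nonneg_left hden ha]

theorem sub_mem_Icc_of_mem_Icc {P s : ℝ} (hs : s ∈ Set.Icc 0 P) : P - s ∈ Set.Icc 0 P :=
  ⟨sub_nonneg.2 hs.2, sub_le_self P hs.1⟩

theorem sum_smul_add_sum_smul {ι κ : Type*} [Fintype ι] [Fintype κ] (c : ℝ) (f : ι → ℝ)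
    (g : κ → ℝ) : ∑ i, (c • f) i + ∑ k, (c • g) k = c * (∑ i, f i + ∑ k, g k) := by
  simp only [Pi.smul_apply, smul_eq_mul, ← mul_sum, mul_add]

def powerSplit (ι : Type*) [Fintype ι] (s : ℝ) : Set (ι → ℝ) := {q | 0 ≤ q ∧ ∑ i, q i = s}

section PowerSplit

variable {ι : Type*} [Fintype ι] {s : ℝ} {q : ι → ℝ}

theorem isCompact_powerSplit (s : ℝ) : IsCompact (powerSplit ι s) := by
  refine (isCompact_Icc (a := 0) (b := fun _ => s)).of_isClosed_subset ?_
    fun q hq => ⟨hq.1, fun i => ?_⟩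
  · exact isClosed_Ici.inter
      (isClosed_singleton.preimage (continuous_finsetSum _ fun i _ => continuous_apply i))
  · rw [← hq.2]
    exact single_le_sum (fun j _ => hq.1 j) (mem_univ i)

theorem const_mem_powerSplit [Nonempty ι] (hs : 0 ≤ s) :
    (fun _ => s / Fintype.card ι) ∈ powerSplit ι s := by
  refine ⟨fun _ => by positivity, ?_⟩
  rw [sum_const, card_univ, nsmul_eq_mul]
  field_simp

theorem smul_mem_powerSplit (hq : q ∈ powerSplit ι s) {c : ℝ} (hc : 0 ≤ c) :
    c • q ∈ powerSplit ι (c * s) :=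
  ⟨smul_nonneg hc hq.1, by simp only [Pi.smul_apply, smul_eq_mul, ← mul_sum, hq.2]⟩

theorem exists_isMaxOn_Icc_prod_powerSplit {A : Type*} [TopologicalSpace A] [Preorder A] [Zero A]
    [CompactIccSpace A] [Nonempty ι] {E : A} (hE : 0 ≤ E) (hs : 0 ≤ s) {R : A × (ι → ℝ) → ℝ}
    (hR : ContinuousOn R (Set.Ici 0)) :
    ∃ x ∈ Set.Icc 0 E ×ˢ powerSplit ι s, IsMaxOn R (Set.Icc 0 E ×ˢ powerSplit ι s) x :=
  (isCompact_Icc.prod (isCompact_powerSplit s)).exists_isMaxOn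
    ⟨(0, _), Set.left_mem_Icc.2 hE, const_mem_powerSplit hs⟩
    (hR.mono fun _ hx => ⟨hx.1.1, hx.2.1⟩)

theorem lt_of_isMaxOn_powerSplit {A : Type*} {B : Set A} {R : A × (ι → ℝ) → ℝ}
    (hzero : ∀ a, R (a, 0) = 0) (hpos : ∀ s, 0 < s → ∃ y ∈ B ×ˢ powerSplit ι s, 0 < R y)
    (hscale : ∀ a ∈ B, ∀ q, 0 ≤ q → 0 < R (a, q) → ∀ c : ℝ, 1 < c → R (a, q) < R (a, c • q))
    {s s' : ℝ} {x x' : A × (ι → ℝ)} (hs : 0 ≤ s) (hss' : s < s')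
    (hx : x ∈ B ×ˢ powerSplit ι s) (hmax : IsMaxOn R (B ×ˢ powerSplit ι s) x)
    (hmax' : IsMaxOn R (B ×ˢ powerSplit ι s') x') : R x < R x' := by
  obtain ⟨a, q⟩ := x
  obtain ⟨y', hy', hRy'⟩ := hpos s' (hs.trans_lt hss')
  rcases hs.eq_or_lt with rfl | hs
  · calc R (a, q) = 0 := by
          rw [show q = 0 from (Fintype.sum_eq_zero_iff_of_nonneg hx.2.1).1 hx.2.2, hzero]
      _ < R y' := hRy'
      _ ≤ R x' := hmax' hy'
  · obtain ⟨y, hy, hRy⟩ := hpos s hs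
    have hmem : (a, (s' / s) • q) ∈ B ×ˢ powerSplit ι s' := by
      refine ⟨hx.1, ?_⟩
      simpa [div_mul_cancel₀ s' hs.ne', hx.2.2] using
        smul_mem_powerSplit hx.2 (div_pos (hs.trans hss') hs).le
    calc R (a, q) < R (a, (s' / s) • q) :=
          hscale a hx.1 q hx.2.1 (hRy.trans_le (hmax hy)) _ ((one_lt_div hs).2 hss')
      _ ≤ R x' := hmax' hmem

end PowerSplit

def prelog (T τ : ℕ) : ℝ := 1 - (τ : ℝ) / T

-- The rates are written in the pilot energies `e = τ q^{up}`, `f = τ p^{up}`, the downlink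
-- powers, and the total downlink power `t`.
def mcQuality {G : ℕ} {K : Fin G → ℕ} (η e : ∀ j : Fin G, Fin (K j) → ℝ) (j : Fin G)
    (k : Fin (K j)) : ℝ :=
  e j k * η j k ^ 2 / (1 + ∑ i, e j i * η j i)

def mcSinr {G : ℕ} {K : Fin G → ℕ} (N : ℕ) (η e : ∀ j : Fin G, Fin (K j) → ℝ) (q : Fin G → ℝ)
    (t : ℝ) : ℝ :=
  ⨅ j, ⨅ k, N * q j * mcQuality η e j k / (1 + η j k * t)

def mcRate {G : ℕ} {K : Fin G → ℕ} (N : ℕ) (η e : ∀ j : Fin G, Fin (K j) → ℝ) (q : Fin G → ℝ)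
    (t : ℝ) : ℝ :=
  Real.logb 2 (1 + mcSinr N η e q t)

def ucQuality {U : ℕ} (β f : Fin U → ℝ) (m : Fin U) : ℝ :=
  f m * β m ^ 2 / (1 + f m * β m)

def ucSinr {U : ℕ} (N : ℕ) (β f p : Fin U → ℝ) (t : ℝ) (m : Fin U) : ℝ :=
  N * p m * ucQuality β f m / (1 + β m * t)

def ucRate {U : ℕ} (N : ℕ) (β α f p : Fin U → ℝ) (t : ℝ) : ℝ :=
  ∑ m, α m * Real.logb 2 (1 + ucSinr N β f p t m)

section Prelog

variable {T τ τ' : ℕ}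

theorem prelog_nonneg (h : τ ≤ T) : 0 ≤ prelog T τ := by
  rw [prelog, sub_nonneg]
  exact div_le_one_of_le₀ (by exact_mod_cast h) (Nat.cast_nonneg T)

theorem prelog_pos (h : τ < T) : 0 < prelog T τ := by
  rw [prelog, sub_pos, div_lt_one (by exact_mod_cast (Nat.zero_le τ).trans_lt h)]
  exact_mod_cast h

theorem prelog_anti (h : τ ≤ τ') : prelog T τ' ≤ prelog T τ := by
  unfold prelog
  gcongr

end Prelog

section Multicast

variable {G : ℕ} {K : Fin G → ℕ} {N : ℕ} {η e : ∀ j : Fin G, Fin (K j) → ℝ} {q : Fin G → ℝ}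
  {t t' c : ℝ}

theorem mcQuality_denom_pos (hη : ∀ j k, 0 < η j k) (he : 0 ≤ e) (j : Fin G) :
    0 < 1 + ∑ i, e j i * η j i := by
  have := sum_nonneg fun i (_ : i ∈ univ) => mul_nonneg (he j i) (hη j i).le
  linarith

theorem mcQuality_nonneg (hη : ∀ j k, 0 < η j k) (he : 0 ≤ e) (j : Fin G) (k : Fin (K j)) :
    0 ≤ mcQuality η e j k :=
  div_nonneg (mul_nonneg (he j k) (sq_nonneg _)) (mcQuality_denom_pos hη he j).le

theorem mcQuality_pos (hη : ∀ j k, 0 < η j k) (he : 0 ≤ e) {j : Fin G} {k : Fin (K j)}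
    (hejk : 0 < e j k) : 0 < mcQuality η e j k :=
  div_pos (mul_pos hejk (pow_pos (hη j k) 2)) (mcQuality_denom_pos hη he j)

theorem mcSinr_nonneg (hη : ∀ j k, 0 < η j k) (he : 0 ≤ e) (hq : 0 ≤ q) (ht : 0 ≤ t) :
    0 ≤ mcSinr N η e q t :=
  Real.iInf_nonneg fun j => Real.iInf_nonneg fun k => by
    have := mcQuality_nonneg hη he j k
    have : 0 ≤ q j := hq j
    have := hη j k
    positivity

theorem mcSinr_smul (hc : 0 ≤ c) : mcSinr N η e (c • q) t = c * mcSinr N η e q t := by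
  rw [mcSinr, mcSinr, Real.mul_iInf_of_nonneg hc]
  congr 1 with j
  rw [Real.mul_iInf_of_nonneg hc]
  congr 1 with k
  rw [Pi.smul_apply, smul_eq_mul]
  ring

theorem mcSinr_le_smul (hη : ∀ j k, 0 < η j k) (he : 0 ≤ e) (hq : 0 ≤ q) (ht : 0 ≤ t)
    (ht' : 0 ≤ t') (hc : 1 ≤ c) (htt' : t' ≤ c * t) :
    mcSinr N η e q t ≤ mcSinr N η e (c • q) t' := by
  refine ciInf_mono (Finite.bddBelow_range _) fun j =>
    ciInf_mono (Finite.bddBelow_range _) fun k => ?_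
  have := mcQuality_nonneg hη he j k
  have : 0 ≤ q j := hq j
  rw [show (N : ℝ) * (c • q) j * mcQuality η e j k = c * (N * q j * mcQuality η e j k) by
    rw [Pi.smul_apply, smul_eq_mul]; ring]
  exact div_one_add_mul_le_mul_div_one_add_mul (by positivity) (hη j k).le ht ht' hc htt'

theorem mcRate_nonneg (hη : ∀ j k, 0 < η j k) (he : 0 ≤ e) (hq : 0 ≤ q) (ht : 0 ≤ t) :
    0 ≤ mcRate N η e q t :=
  Real.logb_nonneg one_lt_two (by linarith [mcSinr_nonneg (N := N) hη he hq ht])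

@[simp]
theorem mcRate_zero : mcRate N η e 0 t = 0 := by
  simp [mcRate, mcSinr]

theorem mcRate_pos [Nonempty (Fin G)] [∀ j, Nonempty (Fin (K j))] (hN : 0 < N)
    (hη : ∀ j k, 0 < η j k) (he : ∀ j k, 0 < e j k) (hq : ∀ j, 0 < q j) (ht : 0 ≤ t) :
    0 < mcRate N η e q t := by
  refine Real.logb_pos one_lt_two (lt_add_of_pos_right 1 ?_)
  obtain ⟨j, hj⟩ := exists_eq_ciInf_of_finite
    (f := fun j => ⨅ k, N * q j * mcQuality η e j k / (1 + η j k * t))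
  obtain ⟨k, hk⟩ := exists_eq_ciInf_of_finite
    (f := fun k => N * q j * mcQuality η e j k / (1 + η j k * t))
  rw [mcSinr, ← hj, ← hk]
  have := mcQuality_pos hη (fun j k => (he j k).le) (he j k)
  have := hq j
  have := hη j k
  positivity

theorem mcRate_le_smul (hη : ∀ j k, 0 < η j k) (he : 0 ≤ e) (hq : 0 ≤ q) (ht : 0 ≤ t)
    (ht' : 0 ≤ t') (hc : 1 ≤ c) (htt' : t' ≤ c * t) :
    mcRate N η e q t ≤ mcRate N η e (c • q) t' :=
  Real.logb_le_logb_of_le one_lt_two (by linarith [mcSinr_nonneg (N := N) hη he hq ht])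
    (by linarith [mcSinr_le_smul (N := N) hη he hq ht ht' hc htt'])

theorem mcRate_lt_smul (hη : ∀ j k, 0 < η j k) (he : 0 ≤ e) (hq : 0 ≤ q) (ht : 0 ≤ t)
    (hc : 1 < c) (hpos : 0 < mcRate N η e q t) :
    mcRate N η e q t < mcRate N η e (c • q) t := by
  have h0 := mcSinr_nonneg (N := N) hη he hq ht
  have hsinr : 0 < mcSinr N η e q t := by
    rw [mcRate, Real.logb_pos_iff one_lt_two (by linarith)] at hpos
    linarith
  rw [mcRate, mcRate, mcSinr_smul (by linarith)]
  exact Real.logb_lt_logb one_lt_two (by linarith) (by nlinarith)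

theorem continuousOn_mcSinr [Nonempty (Fin G)] [∀ j, Nonempty (Fin (K j))]
    (hη : ∀ j k, 0 < η j k) :
    ContinuousOn (fun x : (∀ j : Fin G, Fin (K j) → ℝ) × (Fin G → ℝ) => mcSinr N η x.1 x.2 t)
      (Set.Ici 0) := by
  unfold mcSinr mcQuality
  apply ContinuousOn.ciInf_apply; intro j
  apply ContinuousOn.ciInf_apply; intro k
  refine ((Continuous.continuousOn (by fun_prop)).mul ?_).div_const _
  exact (Continuous.continuousOn (by fun_prop)).div (Continuous.continuousOn (by fun_prop))
    fun x hx => (mcQuality_denom_pos hη hx.1 j).ne'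

theorem continuousOn_mcRate [Nonempty (Fin G)] [∀ j, Nonempty (Fin (K j))]
    (hη : ∀ j k, 0 < η j k) (ht : 0 ≤ t) :
    ContinuousOn (fun x : (∀ j : Fin G, Fin (K j) → ℝ) × (Fin G → ℝ) => mcRate N η x.1 x.2 t)
      (Set.Ici 0) :=
  (continuousOn_const.add (continuousOn_mcSinr hη)).logb fun x hx =>
    (by linarith [mcSinr_nonneg (N := N) hη hx.1 hx.2 ht] : (0 : ℝ) < 1 + _).ne'

end Multicast

section Unicast

variable {U : ℕ} {N : ℕ} {β α f p : Fin U → ℝ} {t t' c : ℝ}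

theorem ucQuality_nonneg (hβ : ∀ m, 0 < β m) (hf : 0 ≤ f) (m : Fin U) :
    0 ≤ ucQuality β f m :=
  div_nonneg (mul_nonneg (hf m) (sq_nonneg _))
    (by nlinarith [mul_nonneg (hf m) (hβ m).le])

theorem ucQuality_pos (hβ : ∀ m, 0 < β m) {m : Fin U} (hfm : 0 < f m) :
    0 < ucQuality β f m :=
  div_pos (mul_pos hfm (pow_pos (hβ m) 2)) (by nlinarith [mul_pos hfm (hβ m)])

theorem ucSinr_nonneg (hβ : ∀ m, 0 < β m) (hf : 0 ≤ f) (hp : 0 ≤ p) (ht : 0 ≤ t) (m : Fin U) :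
    0 ≤ ucSinr N β f p t m := by
  have := ucQuality_nonneg hβ hf m
  have : 0 ≤ p m := hp m
  have := hβ m
  unfold ucSinr
  positivity

theorem ucSinr_smul (m : Fin U) : ucSinr N β f (c • p) t m = c * ucSinr N β f p t m := by
  simp only [ucSinr, Pi.smul_apply, smul_eq_mul]
  ring

theorem ucSinr_le_smul (hβ : ∀ m, 0 < β m) (hf : 0 ≤ f) (hp : 0 ≤ p) (ht : 0 ≤ t)
    (ht' : 0 ≤ t') (hc : 1 ≤ c) (htt' : t' ≤ c * t) (m : Fin U) :
    ucSinr N β f p t m ≤ ucSinr N β f (c • p) t' m := by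
  have := ucQuality_nonneg hβ hf m
  have : 0 ≤ p m := hp m
  rw [ucSinr, ucSinr, show (N : ℝ) * (c • p) m * ucQuality β f m = c * (N * p m * ucQuality β f m)
    by rw [Pi.smul_apply, smul_eq_mul]; ring]
  exact div_one_add_mul_le_mul_div_one_add_mul (by positivity) (hβ m).le ht ht' hc htt'

theorem ucRate_nonneg (hβ : ∀ m, 0 < β m) (hα : 0 ≤ α) (hf : 0 ≤ f) (hp : 0 ≤ p) (ht : 0 ≤ t) :
    0 ≤ ucRate N β α f p t :=
  sum_nonneg fun m _ => mul_nonneg (hα m)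
    (Real.logb_nonneg one_lt_two (by linarith [ucSinr_nonneg (N := N) hβ hf hp ht m]))

@[simp]
theorem ucRate_zero : ucRate N β α f 0 t = 0 := by
  simp [ucRate, ucSinr]

theorem ucRate_pos [Nonempty (Fin U)] (hN : 0 < N) (hβ : ∀ m, 0 < β m) (hα : ∀ m, 0 < α m)
    (hf : ∀ m, 0 < f m) (hp : ∀ m, 0 < p m) (ht : 0 ≤ t) : 0 < ucRate N β α f p t := by
  refine sum_pos (fun m _ => mul_pos (hα m) (Real.logb_pos one_lt_two ?_)) univ_nonempty
  have := ucQuality_pos hβ (hf m)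
  have := hp m
  have := hβ m
  have : 0 < ucSinr N β f p t m := by unfold ucSinr; positivity
  linarith

theorem ucRate_le_smul (hβ : ∀ m, 0 < β m) (hα : 0 ≤ α) (hf : 0 ≤ f) (hp : 0 ≤ p) (ht : 0 ≤ t)
    (ht' : 0 ≤ t') (hc : 1 ≤ c) (htt' : t' ≤ c * t) :
    ucRate N β α f p t ≤ ucRate N β α f (c • p) t' :=
  sum_le_sum fun m _ => mul_le_mul_of_nonneg_left
    (Real.logb_le_logb_of_le one_lt_two (by linarith [ucSinr_nonneg (N := N) hβ hf hp ht m])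
      (by linarith [ucSinr_le_smul (N := N) hβ hf hp ht ht' hc htt' m])) (hα m)

theorem ucRate_lt_smul (hβ : ∀ m, 0 < β m) (hα : ∀ m, 0 < α m) (hf : 0 ≤ f) (hp : 0 ≤ p)
    (ht : 0 ≤ t) (hc : 1 < c) (hpos : 0 < ucRate N β α f p t) :
    ucRate N β α f p t < ucRate N β α f (c • p) t := by
  have hpos' : ∑ _m : Fin U, (0 : ℝ) < ∑ m, α m * Real.logb 2 (1 + ucSinr N β f p t m) := by
    rwa [sum_const_zero]
  obtain ⟨m, -, hm⟩ := exists_lt_of_sum_lt hpos'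
  have hsinr : 0 < ucSinr N β f p t m := by
    have h0 := ucSinr_nonneg (N := N) hβ hf hp ht m
    have := pos_of_mul_pos_right hm (hα m).le
    rw [Real.logb_pos_iff one_lt_two (by linarith)] at this
    linarith
  refine sum_lt_sum (fun i _ => ?_) ⟨m, mem_univ m, ?_⟩
  · have h0 := ucSinr_nonneg (N := N) hβ hf hp ht i
    refine mul_le_mul_of_nonneg_left ?_ (hα i).le
    rw [ucSinr_smul]
    exact Real.logb_le_logb_of_le one_lt_two (by linarith) (by nlinarith)
  · refine mul_lt_mul_of_pos_left ?_ (hα m)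
    rw [ucSinr_smul]
    exact Real.logb_lt_logb one_lt_two (by linarith) (by nlinarith)

theorem continuousOn_ucRate (hβ : ∀ m, 0 < β m) (ht : 0 ≤ t) :
    ContinuousOn (fun x : (Fin U → ℝ) × (Fin U → ℝ) => ucRate N β α x.1 x.2 t) (Set.Ici 0) := by
  refine continuousOn_finsetSum _ fun m _ => continuousOn_const.mul ?_
  refine (continuousOn_const.add ?_).logb fun x hx =>
    (by linarith [ucSinr_nonneg (N := N) hβ hx.1 hx.2 ht m] : (0 : ℝ) < 1 + _).ne'
  unfold ucSinr ucQuality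
  refine ((Continuous.continuousOn (by fun_prop)).mul ?_).div_const _
  exact (Continuous.continuousOn (by fun_prop)).div (Continuous.continuousOn (by fun_prop))
    fun x hx => by nlinarith [mul_nonneg (hx.1 m) (hβ m).le]

end Unicast

section Objectives

variable {U G : ℕ} {K : Fin G → ℕ} {N T : ℕ} {P s : ℝ} {η Emu : ∀ j : Fin G, Fin (K j) → ℝ}
  {β Eun α : Fin U → ℝ} {τ : ℕ} {qup : ∀ j : Fin G, Fin (K j) → ℝ} {qdl : Fin G → ℝ}
  {pup pdl : Fin U → ℝ}

theorem OmuX_eq : OmuX N T η τ qup qdl pdl =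
    prelog T τ * mcRate N η (fun j k => τ * qup j k) qdl (∑ m, pdl m + ∑ j, qdl j) :=
  rfl

theorem OunX_eq : OunX N T β α τ pup pdl qdl =
    prelog T τ * ucRate N β α (fun m => τ * pup m) pdl (∑ m, pdl m + ∑ j, qdl j) :=
  rfl

theorem OmuX_div {e : ∀ j : Fin G, Fin (K j) → ℝ} (hτ : τ ≠ 0) :
    OmuX N T η τ (fun j k => e j k / τ) qdl pdl =
      prelog T τ * mcRate N η e qdl (∑ m, pdl m + ∑ j, qdl j) := by
  rw [OmuX_eq]
  congr
  ext j k
  field_simp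

theorem OunX_div {f : Fin U → ℝ} (hτ : τ ≠ 0) :
    OunX N T β α τ (fun m => f m / τ) pdl qdl =
      prelog T τ * ucRate N β α f pdl (∑ m, pdl m + ∑ j, qdl j) := by
  rw [OunX_eq]
  congr
  ext m
  field_simp

theorem feasX.mcEnergy_mem (h : feasX T P Emu Eun τ qup qdl pup pdl) :
    (fun j k => (τ : ℝ) * qup j k) ∈ Set.Icc 0 Emu :=
  ⟨fun j k => mul_nonneg τ.cast_nonneg (h.2.2.2.2.1 j k).1, fun j k => (h.2.2.2.2.1 j k).2⟩

theorem feasX.ucEnergy_mem (h : feasX T P Emu Eun τ qup qdl pup pdl) :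
    (fun m => (τ : ℝ) * pup m) ∈ Set.Icc 0 Eun :=
  ⟨fun m => mul_nonneg τ.cast_nonneg (h.2.2.2.2.2.1 m).1, fun m => (h.2.2.2.2.2.1 m).2⟩

theorem feasX.smul (h : feasX T P Emu Eun τ qup qdl pup pdl) {c : ℝ} (hc : 0 ≤ c)
    (hcP : c * (∑ m, pdl m + ∑ j, qdl j) ≤ P) :
    feasX T P Emu Eun τ qup (c • qdl) pup (c • pdl) := by
  obtain ⟨hτ, hτT, hqdl, hpdl, hqup, hpup, -⟩ := h
  refine ⟨hτ, hτT, fun j => mul_nonneg hc (hqdl j), fun m => mul_nonneg hc (hpdl m), hqup, hpup, ?_⟩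
  rwa [sum_smul_add_sum_smul]

theorem feasX_div (hτ : U + G ≤ τ) (hτT : τ ≤ T) (hτ0 : τ ≠ 0) {e : ∀ j : Fin G, Fin (K j) → ℝ}
    {f : Fin U → ℝ} (he : e ∈ Set.Icc 0 Emu) (hf : f ∈ Set.Icc 0 Eun) (hqdl : 0 ≤ qdl)
    (hpdl : 0 ≤ pdl) (hP : ∑ m, pdl m + ∑ j, qdl j ≤ P) :
    feasX T P Emu Eun τ (fun j k => e j k / τ) qdl (fun m => f m / τ) pdl := by
  have hτ' : (0 : ℝ) < τ := by exact_mod_cast Nat.pos_of_ne_zero hτ0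
  refine ⟨hτ, hτT, hqdl, hpdl, fun j k => ⟨div_nonneg (he.1 j k) hτ'.le, ?_⟩,
    fun m => ⟨div_nonneg (hf.1 m) hτ'.le, ?_⟩, hP⟩
  · rw [mul_div_cancel₀ _ hτ'.ne']
    exact he.2 j k
  · rw [mul_div_cancel₀ _ hτ'.ne']
    exact hf.2 m

theorem mcRate_le_of_isMaxOn (hη : ∀ j k, 0 < η j k) {e : ∀ j : Fin G, Fin (K j) → ℝ}
    (he : e ∈ Set.Icc 0 Emu) {q : Fin G → ℝ} (hq : 0 ≤ q) (hqs : ∑ j, q j ≤ s) (hsP : s ≤ P)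
    {x : (∀ j : Fin G, Fin (K j) → ℝ) × (Fin G → ℝ)}
    (hx : x ∈ Set.Icc 0 Emu ×ˢ powerSplit (Fin G) s)
    (hmax : IsMaxOn (fun x => mcRate N η x.1 x.2 P) (Set.Icc 0 Emu ×ˢ powerSplit (Fin G) s) x) :
    mcRate N η e q (P - s + ∑ j, q j) ≤ mcRate N η x.1 x.2 P := by
  have hq0 : 0 ≤ ∑ j, q j := sum_nonneg fun j _ => hq j
  rcases hq0.eq_or_lt with h0 | hpos
  · rw [(Fintype.sum_eq_zero_iff_of_nonneg hq).1 h0.symm, mcRate_zero]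
    exact mcRate_nonneg hη hx.1.1 hx.2.1 (by linarith)
  · set c := s / ∑ j, q j
    have hc : 1 ≤ c := (one_le_div hpos).2 hqs
    have hcq : c * ∑ j, q j = s := div_mul_cancel₀ s hpos.ne'
    have hmem : (e, c • q) ∈ Set.Icc 0 Emu ×ˢ powerSplit (Fin G) s :=
      ⟨he, hcq ▸ smul_mem_powerSplit ⟨hq, rfl⟩ (by linarith)⟩
    calc mcRate N η e q (P - s + ∑ j, q j) ≤ mcRate N η e (c • q) P :=
          mcRate_le_smul hη he.1 hq (by linarith) (by linarith) hc
            (by nlinarith [mul_le_mul_of_nonneg_right hc (sub_nonneg.2 hsP)])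
      _ ≤ mcRate N η x.1 x.2 P := isMaxOn_iff.1 hmax (e, c • q) hmem

theorem ucRate_le_of_isMaxOn (hβ : ∀ m, 0 < β m) (hα : 0 ≤ α) {f : Fin U → ℝ}
    (hf : f ∈ Set.Icc 0 Eun) {p : Fin U → ℝ} (hp : 0 ≤ p) (hps : ∑ m, p m ≤ s) (hsP : s ≤ P)
    {y : (Fin U → ℝ) × (Fin U → ℝ)} (hy : y ∈ Set.Icc 0 Eun ×ˢ powerSplit (Fin U) s)
    (hmax : IsMaxOn (fun y => ucRate N β α y.1 y.2 P) (Set.Icc 0 Eun ×ˢ powerSplit (Fin U) s) y) :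
    ucRate N β α f p (∑ m, p m + (P - s)) ≤ ucRate N β α y.1 y.2 P := by
  have hp0 : 0 ≤ ∑ m, p m := sum_nonneg fun m _ => hp m
  rcases hp0.eq_or_lt with h0 | hpos
  · rw [(Fintype.sum_eq_zero_iff_of_nonneg hp).1 h0.symm, ucRate_zero]
    exact ucRate_nonneg hβ hα hy.1.1 hy.2.1 (by linarith)
  · set c := s / ∑ m, p m
    have hc : 1 ≤ c := (one_le_div hpos).2 hps
    have hcp : c * ∑ m, p m = s := div_mul_cancel₀ s hpos.ne'
    have hmem : (f, c • p) ∈ Set.Icc 0 Eun ×ˢ powerSplit (Fin U) s :=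
      ⟨hf, hcp ▸ smul_mem_powerSplit ⟨hp, rfl⟩ (by linarith)⟩
    calc ucRate N β α f p (∑ m, p m + (P - s)) ≤ ucRate N β α f (c • p) P :=
          ucRate_le_smul hβ hα hf.1 hp (by linarith) (by linarith) hc
            (by nlinarith [mul_le_mul_of_nonneg_right hc (sub_nonneg.2 hsP)])
      _ ≤ ucRate N β α y.1 y.2 P := isMaxOn_iff.1 hmax (f, c • p) hmem

end Objectives

section ValueFunctions

variable {U G : ℕ} {K : Fin G → ℕ} {N T : ℕ} {P s : ℝ} {η Emu : ∀ j : Fin G, Fin (K j) → ℝ}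
  {β Eun α : Fin U → ℝ} {τ : ℕ} {qup : ∀ j : Fin G, Fin (K j) → ℝ} {qdl : Fin G → ℝ}
  {pup pdl : Fin U → ℝ}

theorem OmuX_le_of_isMaxOn (hη : ∀ j k, 0 < η j k)
    {x : (∀ j : Fin G, Fin (K j) → ℝ) × (Fin G → ℝ)}
    (hx : x ∈ Set.Icc 0 Emu ×ˢ powerSplit (Fin G) s)
    (hmax : IsMaxOn (fun x => mcRate N η x.1 x.2 P) (Set.Icc 0 Emu ×ˢ powerSplit (Fin G) s) x)
    (hfeas : feasX T P Emu Eun τ qup qdl pup pdl) (hq : ∑ j, qdl j ≤ s)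
    (hp : ∑ m, pdl m = P - s) :
    OmuX N T η τ qup qdl pdl ≤ prelog T (U + G) * mcRate N η x.1 x.2 P := by
  obtain ⟨hτ, hτT, hqdl, hpdl, -, -, -⟩ := id hfeas
  have he := hfeas.mcEnergy_mem
  have hsP : s ≤ P := by linarith [sum_nonneg fun m (_ : m ∈ univ) => hpdl m]
  have hq0 : 0 ≤ ∑ j, qdl j := sum_nonneg fun j _ => hqdl j
  rw [OmuX_eq, hp]
  calc prelog T τ * mcRate N η _ qdl (P - s + ∑ j, qdl j)
      ≤ prelog T (U + G) * mcRate N η _ qdl (P - s + ∑ j, qdl j) :=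
        mul_le_mul_of_nonneg_right (prelog_anti hτ) (mcRate_nonneg hη he.1 hqdl (by linarith))
    _ ≤ prelog T (U + G) * mcRate N η x.1 x.2 P :=
        mul_le_mul_of_nonneg_left (mcRate_le_of_isMaxOn hη he hqdl hq hsP hx hmax)
          (prelog_nonneg (hτ.trans hτT))

theorem OunX_le_of_isMaxOn (hβ : ∀ m, 0 < β m) (hα : 0 ≤ α)
    {y : (Fin U → ℝ) × (Fin U → ℝ)} (hy : y ∈ Set.Icc 0 Eun ×ˢ powerSplit (Fin U) s)
    (hmax : IsMaxOn (fun y => ucRate N β α y.1 y.2 P) (Set.Icc 0 Eun ×ˢ powerSplit (Fin U) s) y)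
    (hfeas : feasX T P Emu Eun τ qup qdl pup pdl) (hp : ∑ m, pdl m ≤ s)
    (hq : ∑ j, qdl j = P - s) :
    OunX N T β α τ pup pdl qdl ≤ prelog T (U + G) * ucRate N β α y.1 y.2 P := by
  obtain ⟨hτ, hτT, hqdl, hpdl, -, -, -⟩ := id hfeas
  have hf := hfeas.ucEnergy_mem
  have hsP : s ≤ P := by linarith [sum_nonneg fun j (_ : j ∈ univ) => hqdl j]
  have hp0 : 0 ≤ ∑ m, pdl m := sum_nonneg fun m _ => hpdl m
  rw [OunX_eq, hq]
  calc prelog T τ * ucRate N β α _ pdl (∑ m, pdl m + (P - s))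
      ≤ prelog T (U + G) * ucRate N β α _ pdl (∑ m, pdl m + (P - s)) :=
        mul_le_mul_of_nonneg_right (prelog_anti hτ)
          (ucRate_nonneg hβ hα hf.1 hpdl (by linarith))
    _ ≤ prelog T (U + G) * ucRate N β α y.1 y.2 P :=
        mul_le_mul_of_nonneg_left (ucRate_le_of_isMaxOn hβ hα hf hpdl hp hsP hy hmax)
          (prelog_nonneg (hτ.trans hτT))

theorem VmuX_eq_of_isMaxOn [Nonempty (Fin U)] (hη : ∀ j k, 0 < η j k) (hEun : 0 ≤ Eun)
    (hT : U + G ≤ T) (hs : s ∈ Set.Icc 0 P)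
    {x : (∀ j : Fin G, Fin (K j) → ℝ) × (Fin G → ℝ)}
    (hx : x ∈ Set.Icc 0 Emu ×ˢ powerSplit (Fin G) s)
    (hmax : IsMaxOn (fun x => mcRate N η x.1 x.2 P) (Set.Icc 0 Emu ×ˢ powerSplit (Fin G) s) x) :
    VmuX N T P η Emu β Eun α s = prelog T (U + G) * mcRate N η x.1 x.2 P := by
  have hτ : U + G ≠ 0 := by have := Fin.pos_iff_nonempty.2 ‹Nonempty (Fin U)›; omega
  have hpdl := const_mem_powerSplit (ι := Fin U) (sub_nonneg.2 hs.2)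
  have hsum : ∑ m, (fun _ : Fin U => (P - s) / Fintype.card (Fin U)) m + ∑ j, x.2 j = P := by
    rw [hpdl.2, hx.2.2]
    ring
  refine IsGreatest.csSup_eq ⟨⟨U + G, _, x.2, _, _, feasX_div le_rfl hT hτ hx.1
    (Set.left_mem_Icc.2 hEun) hx.2.1 hpdl.1 hsum.le, hx.2.2.le, hpdl.2, ?_⟩, ?_⟩
  · rw [OmuX_div hτ, hsum]
  · rintro _ ⟨τ, qup, qdl, pup, pdl, hfeas, hq, hp, rfl⟩
    exact OmuX_le_of_isMaxOn hη hx hmax hfeas hq hp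

theorem VunX_eq_of_isMaxOn [Nonempty (Fin G)] (hβ : ∀ m, 0 < β m) (hα : 0 ≤ α)
    (hEmu : 0 ≤ Emu) (hT : U + G ≤ T) (hs : s ∈ Set.Icc 0 P)
    {y : (Fin U → ℝ) × (Fin U → ℝ)} (hy : y ∈ Set.Icc 0 Eun ×ˢ powerSplit (Fin U) s)
    (hmax : IsMaxOn (fun y => ucRate N β α y.1 y.2 P) (Set.Icc 0 Eun ×ˢ powerSplit (Fin U) s) y) :
    VunX N T P η Emu β Eun α s = prelog T (U + G) * ucRate N β α y.1 y.2 P := by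
  have hτ : U + G ≠ 0 := by have := Fin.pos_iff_nonempty.2 ‹Nonempty (Fin G)›; omega
  have hqdl := const_mem_powerSplit (ι := Fin G) (sub_nonneg.2 hs.2)
  have hsum : ∑ m, y.2 m + ∑ j, (fun _ : Fin G => (P - s) / Fintype.card (Fin G)) j = P := by
    rw [hqdl.2, hy.2.2]
    ring
  refine IsGreatest.csSup_eq ⟨⟨U + G, _, _, _, y.2, feasX_div le_rfl hT hτ
    (Set.left_mem_Icc.2 hEmu) hy.1 hqdl.1 hy.2.1 hsum.le, hy.2.2.le, hqdl.2, ?_⟩, ?_⟩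
  · rw [OunX_div hτ, hsum]
  · rintro _ ⟨τ, qup, qdl, pup, pdl, hfeas, hp, hq, rfl⟩
    exact OunX_le_of_isMaxOn hβ hα hy hmax hfeas hp hq

end ValueFunctions

def paretoCurve {U G : ℕ} {K : Fin G → ℕ} (N T : ℕ) (P : ℝ)
    (η Emu : ∀ j : Fin G, Fin (K j) → ℝ) (β Eun α : Fin U → ℝ) (s : ℝ) : ℝ × ℝ :=
  (VmuX N T P η Emu β Eun α s, VunX N T P η Emu β Eun α (P - s))

section ParetoBoundary

variable {U G : ℕ} {K : Fin G → ℕ} {N T : ℕ} {P s : ℝ} {η Emu : ∀ j : Fin G, Fin (K j) → ℝ}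
  {β Eun α : Fin U → ℝ} {τ : ℕ} {qup : ∀ j : Fin G, Fin (K j) → ℝ} {qdl : Fin G → ℝ}
  {pup pdl : Fin U → ℝ} {c : ℝ}

theorem OmuX_le_VmuX [Nonempty (Fin U)] [Nonempty (Fin G)] [∀ j, Nonempty (Fin (K j))]
    (hη : ∀ j k, 0 < η j k) (hEmu : 0 ≤ Emu) (hEun : 0 ≤ Eun)
    (hfeas : feasX T P Emu Eun τ qup qdl pup pdl) (hq : ∑ j, qdl j ≤ s)
    (hp : ∑ m, pdl m = P - s) :
    OmuX N T η τ qup qdl pdl ≤ VmuX N T P η Emu β Eun α s := by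
  obtain ⟨hτ, hτT, hqdl, hpdl, -, -, -⟩ := id hfeas
  have hs : s ∈ Set.Icc 0 P := ⟨(sum_nonneg fun j _ => hqdl j).trans hq,
    by linarith [sum_nonneg fun m (_ : m ∈ univ) => hpdl m]⟩
  obtain ⟨x, hx, hmax⟩ := exists_isMaxOn_Icc_prod_powerSplit hEmu hs.1
    (continuousOn_mcRate (N := N) hη (hs.1.trans hs.2))
  rw [VmuX_eq_of_isMaxOn hη hEun (hτ.trans hτT) hs hx hmax]
  exact OmuX_le_of_isMaxOn hη hx hmax hfeas hq hp

theorem OunX_le_VunX [Nonempty (Fin U)] [Nonempty (Fin G)] (hβ : ∀ m, 0 < β m) (hα : 0 ≤ α)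
    (hEmu : 0 ≤ Emu) (hEun : 0 ≤ Eun) (hfeas : feasX T P Emu Eun τ qup qdl pup pdl)
    (hp : ∑ m, pdl m ≤ s) (hq : ∑ j, qdl j = P - s) :
    OunX N T β α τ pup pdl qdl ≤ VunX N T P η Emu β Eun α s := by
  obtain ⟨hτ, hτT, hqdl, hpdl, -, -, -⟩ := id hfeas
  have hs : s ∈ Set.Icc 0 P := ⟨(sum_nonneg fun m _ => hpdl m).trans hp,
    by linarith [sum_nonneg fun j (_ : j ∈ univ) => hqdl j]⟩
  obtain ⟨y, hy, hmax⟩ := exists_isMaxOn_Icc_prod_powerSplit hEun hs.1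
    (continuousOn_ucRate (N := N) (α := α) hβ (hs.1.trans hs.2))
  rw [VunX_eq_of_isMaxOn hβ hα hEmu (hτ.trans hτT) hs hy hmax]
  exact OunX_le_of_isMaxOn hβ hα hy hmax hfeas hp hq

theorem VunX_nonneg [Nonempty (Fin U)] [Nonempty (Fin G)] (hβ : ∀ m, 0 < β m) (hα : 0 ≤ α)
    (hEmu : 0 ≤ Emu) (hEun : 0 ≤ Eun) (hT : U + G ≤ T) (hs : s ∈ Set.Icc 0 P) :
    0 ≤ VunX N T P η Emu β Eun α s := by
  obtain ⟨y, hy, hmax⟩ := exists_isMaxOn_Icc_prod_powerSplit hEun hs.1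
    (continuousOn_ucRate (N := N) (α := α) hβ (hs.1.trans hs.2))
  rw [VunX_eq_of_isMaxOn hβ hα hEmu hT hs hy hmax]
  exact mul_nonneg (prelog_nonneg hT) (ucRate_nonneg hβ hα hy.1.1 hy.2.1 (hs.1.trans hs.2))

theorem VmuX_strictMonoOn [Nonempty (Fin U)] [Nonempty (Fin G)] [∀ j, Nonempty (Fin (K j))]
    (hN : 0 < N) (hη : ∀ j k, 0 < η j k) (hEmu : ∀ j k, 0 < Emu j k) (hEun : 0 ≤ Eun)
    (hT : U + G < T) : StrictMonoOn (VmuX N T P η Emu β Eun α) (Set.Icc 0 P) := by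
  intro s hs s' hs' hss'
  have hEmu0 : 0 ≤ Emu := fun j k => (hEmu j k).le
  have hP : 0 ≤ P := hs.1.trans hs.2
  obtain ⟨x, hx, hmax⟩ := exists_isMaxOn_Icc_prod_powerSplit hEmu0 hs.1
    (continuousOn_mcRate (N := N) hη hP)
  obtain ⟨x', hx', hmax'⟩ := exists_isMaxOn_Icc_prod_powerSplit hEmu0 hs'.1
    (continuousOn_mcRate (N := N) hη hP)
  rw [VmuX_eq_of_isMaxOn hη hEun hT.le hs hx hmax, VmuX_eq_of_isMaxOn hη hEun hT.le hs' hx' hmax']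
  refine mul_lt_mul_of_pos_left (lt_of_isMaxOn_powerSplit (fun _ => mcRate_zero)
    (fun t ht => ⟨(Emu, fun _ => t / Fintype.card (Fin G)),
      ⟨Set.right_mem_Icc.2 hEmu0, const_mem_powerSplit ht.le⟩,
      mcRate_pos hN hη hEmu (fun _ => by positivity) hP⟩)
    (fun e he q hq hpos c hc => mcRate_lt_smul hη he.1 hq hP hc hpos) hs.1 hss' hx hmax hmax')
    (prelog_pos hT)

theorem VunX_strictMonoOn [Nonempty (Fin U)] [Nonempty (Fin G)] (hN : 0 < N)
    (hβ : ∀ m, 0 < β m) (hα : ∀ m, 0 < α m) (hEmu : 0 ≤ Emu) (hEun : ∀ m, 0 < Eun m)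
    (hT : U + G < T) : StrictMonoOn (VunX N T P η Emu β Eun α) (Set.Icc 0 P) := by
  intro s hs s' hs' hss'
  have hα0 : 0 ≤ α := fun m => (hα m).le
  have hEun0 : 0 ≤ Eun := fun m => (hEun m).le
  have hP : 0 ≤ P := hs.1.trans hs.2
  obtain ⟨y, hy, hmax⟩ := exists_isMaxOn_Icc_prod_powerSplit hEun0 hs.1
    (continuousOn_ucRate (N := N) (α := α) hβ hP)
  obtain ⟨y', hy', hmax'⟩ := exists_isMaxOn_Icc_prod_powerSplit hEun0 hs'.1
    (continuousOn_ucRate (N := N) (α := α) hβ hP)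
  rw [VunX_eq_of_isMaxOn hβ hα0 hEmu hT.le hs hy hmax,
    VunX_eq_of_isMaxOn hβ hα0 hEmu hT.le hs' hy' hmax']
  refine mul_lt_mul_of_pos_left (lt_of_isMaxOn_powerSplit (fun _ => ucRate_zero)
    (fun t ht => ⟨(Eun, fun _ => t / Fintype.card (Fin U)),
      ⟨Set.right_mem_Icc.2 hEun0, const_mem_powerSplit ht.le⟩,
      ucRate_pos hN hβ hα hEun (fun _ => by positivity) hP⟩)
    (fun f hf p hp hpos c hc => ucRate_lt_smul hβ hα hf.1 hp hP hc hpos) hs.1 hss' hy hmax hmax')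
    (prelog_pos hT)

theorem OmuX_le_OmuX_smul (hη : ∀ j k, 0 < η j k) (hfeas : feasX T P Emu Eun τ qup qdl pup pdl)
    (hc : 1 ≤ c) : OmuX N T η τ qup qdl pdl ≤ OmuX N T η τ qup (c • qdl) (c • pdl) := by
  obtain ⟨-, hτT, hqdl, hpdl, -, -, -⟩ := id hfeas
  have ht : 0 ≤ ∑ m, pdl m + ∑ j, qdl j :=
    add_nonneg (sum_nonneg fun m _ => hpdl m) (sum_nonneg fun j _ => hqdl j)
  rw [OmuX_eq, OmuX_eq, sum_smul_add_sum_smul]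
  exact mul_le_mul_of_nonneg_left (mcRate_le_smul hη hfeas.mcEnergy_mem.1 hqdl ht
    (by positivity) hc le_rfl) (prelog_nonneg hτT)

theorem OunX_le_OunX_smul (hβ : ∀ m, 0 < β m) (hα : 0 ≤ α)
    (hfeas : feasX T P Emu Eun τ qup qdl pup pdl) (hc : 1 ≤ c) :
    OunX N T β α τ pup pdl qdl ≤ OunX N T β α τ pup (c • pdl) (c • qdl) := by
  obtain ⟨-, hτT, hqdl, hpdl, -, -, -⟩ := id hfeas
  have ht : 0 ≤ ∑ m, pdl m + ∑ j, qdl j :=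
    add_nonneg (sum_nonneg fun m _ => hpdl m) (sum_nonneg fun j _ => hqdl j)
  rw [OunX_eq, OunX_eq, sum_smul_add_sum_smul]
  exact mul_le_mul_of_nonneg_left (ucRate_le_smul hβ hα hfeas.ucEnergy_mem.1 hpdl ht
    (by positivity) hc le_rfl) (prelog_nonneg hτT)

-- Scale all downlink powers up to the full budget `P`; `s` is the multicast power after scaling.
theorem exists_le_paretoCurve [Nonempty (Fin U)] [Nonempty (Fin G)] [∀ j, Nonempty (Fin (K j))]
    (hη : ∀ j k, 0 < η j k) (hβ : ∀ m, 0 < β m) (hα : 0 ≤ α) (hEmu : 0 ≤ Emu) (hEun : 0 ≤ Eun)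
    (hfeas : feasX T P Emu Eun τ qup qdl pup pdl) :
    ∃ s ∈ Set.Icc 0 P, (OmuX N T η τ qup qdl pdl, OunX N T β α τ pup pdl qdl) ≤
      paretoCurve N T P η Emu β Eun α s := by
  obtain ⟨hτ, hτT, hqdl, hpdl, -, -, hP⟩ := id hfeas
  have hq0 : 0 ≤ ∑ j, qdl j := sum_nonneg fun j _ => hqdl j
  have hp0 : 0 ≤ ∑ m, pdl m := sum_nonneg fun m _ => hpdl m
  rcases (add_nonneg hp0 hq0).eq_or_lt with h0 | hpos
  · have hpdl0 : pdl = 0 := (Fintype.sum_eq_zero_iff_of_nonneg hpdl).1 (by linarith)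
    refine ⟨P, ⟨by linarith, le_rfl⟩,
      Prod.mk_le_mk.2 ⟨OmuX_le_VmuX hη hEmu hEun hfeas (by linarith) (by linarith), ?_⟩⟩
    rw [OunX_eq, hpdl0, ucRate_zero, mul_zero, sub_self]
    exact VunX_nonneg hβ hα hEmu hEun (hτ.trans hτT) ⟨le_rfl, by linarith⟩
  · set c := P / (∑ m, pdl m + ∑ j, qdl j)
    have hc : 1 ≤ c := (one_le_div hpos).2 hP
    have hct : c * (∑ m, pdl m + ∑ j, qdl j) = P := div_mul_cancel₀ P hpos.ne'
    have hfeas' := hfeas.smul (by linarith) hct.le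
    have hq : ∑ j, (c • qdl) j = c * ∑ j, qdl j := by
      simp only [Pi.smul_apply, smul_eq_mul, ← mul_sum]
    have hp : ∑ m, (c • pdl) m = P - c * ∑ j, qdl j := by
      rw [← hct, ← sum_smul_add_sum_smul, hq]
      ring
    refine ⟨c * ∑ j, qdl j, ⟨by positivity, by nlinarith⟩, Prod.mk_le_mk.2
      ⟨(OmuX_le_OmuX_smul hη hfeas hc).trans (OmuX_le_VmuX hη hEmu hEun hfeas' hq.le hp),
        (OunX_le_OunX_smul hβ hα hfeas hc).trans
          (OunX_le_VunX hβ hα hEmu hEun hfeas' hp.le (by rw [hq]; ring))⟩⟩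

theorem paretoCurve_mem_attainS [Nonempty (Fin U)] [Nonempty (Fin G)]
    [∀ j, Nonempty (Fin (K j))] (hη : ∀ j k, 0 < η j k) (hβ : ∀ m, 0 < β m) (hα : 0 ≤ α)
    (hEmu : 0 ≤ Emu) (hEun : 0 ≤ Eun) (hT : U + G ≤ T) (hs : s ∈ Set.Icc 0 P) :
    paretoCurve N T P η Emu β Eun α s ∈ attainS N T P η Emu β Eun α := by
  have hP : 0 ≤ P := hs.1.trans hs.2
  have hs' := sub_mem_Icc_of_mem_Icc hs
  have hτ : U + G ≠ 0 := by have := Fin.pos_iff_nonempty.2 ‹Nonempty (Fin G)›; omega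
  obtain ⟨x, hx, hmax⟩ := exists_isMaxOn_Icc_prod_powerSplit hEmu hs.1
    (continuousOn_mcRate (N := N) hη hP)
  obtain ⟨y, hy, hmaxy⟩ := exists_isMaxOn_Icc_prod_powerSplit hEun hs'.1
    (continuousOn_ucRate (N := N) (α := α) hβ hP)
  have hsum : ∑ m, y.2 m + ∑ j, x.2 j = P := by
    rw [hx.2.2, hy.2.2]
    ring
  refine ⟨U + G, _, x.2, _, y.2, feasX_div le_rfl hT hτ hx.1 hy.1 hx.2.1 hy.2.1 hsum.le, ?_⟩
  rw [paretoCurve, VmuX_eq_of_isMaxOn hη hEun hT hs hx hmax,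
    VunX_eq_of_isMaxOn hβ hα hEmu hT hs' hy hmaxy, OmuX_div hτ, OunX_div hτ, hsum]

end ParetoBoundary

theorem moop_strong_pareto_boundary_general
    (U G : ℕ) (hU : 1 ≤ U) (hG : 1 ≤ G) (K : Fin G → ℕ) (hK : ∀ j, 1 ≤ K j)
    (N : ℕ) (hN : 1 ≤ N) (T : ℕ) (hT : U + G < T)
    (P : ℝ)
    (η Emu : ∀ j : Fin G, Fin (K j) → ℝ) (β Eun α : Fin U → ℝ)
    (hη : ∀ j k, 0 < η j k) (hEmu : ∀ j k, 0 < Emu j k)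
    (hβ : ∀ m, 0 < β m) (hEun : ∀ m, 0 < Eun m) (hα : ∀ m, 0 < α m) :
    {p : ℝ × ℝ | p ∈ attainS N T P η Emu β Eun α ∧
        ¬ ∃ q ∈ attainS N T P η Emu β Eun α,
          (p.1 ≤ q.1 ∧ p.2 < q.2) ∨ (p.1 < q.1 ∧ p.2 ≤ q.2)}
      = {p : ℝ × ℝ | ∃ s ∈ Set.Icc (0 : ℝ) P,
          p = (VmuX N T P η Emu β Eun α s, VunX N T P η Emu β Eun α (P - s))} := by
  have : Nonempty (Fin U) := ⟨⟨0, hU⟩⟩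
  have : Nonempty (Fin G) := ⟨⟨0, hG⟩⟩
  have : ∀ j, Nonempty (Fin (K j)) := fun j => ⟨⟨0, hK j⟩⟩
  have hα0 : 0 ≤ α := fun m => (hα m).le
  have hEmu0 : 0 ≤ Emu := fun j k => (hEmu j k).le
  have hEun0 : 0 ≤ Eun := fun m => (hEun m).le
  have hun := VunX_strictMonoOn (N := N) (P := P) (η := η) hN hβ hα hEmu0 hEun hT
  have hcurve : IsAntichain (· ≤ ·) (paretoCurve N T P η Emu β Eun α '' Set.Icc 0 P) :=
    isAntichain_image_of_strictMonoOn_of_strictAntiOn (VmuX_strictMonoOn hN hη hEmu hEun0 hT)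
      fun s hs s' hs' hss' =>
        hun (sub_mem_Icc_of_mem_Icc hs') (sub_mem_Icc_of_mem_Icc hs) (sub_lt_sub_left hss' P)
  have hdom : ∀ x ∈ attainS N T P η Emu β Eun α,
      ∃ c ∈ paretoCurve N T P η Emu β Eun α '' Set.Icc 0 P, x ≤ c := by
    rintro _ ⟨τ, qup, qdl, pup, pdl, hfeas, rfl⟩
    obtain ⟨s, hs, hle⟩ := exists_le_paretoCurve hη hβ hα0 hEmu0 hEun0 hfeas
    exact ⟨_, ⟨s, hs, rfl⟩, hle⟩
  convert hcurve.setOfPred_maximal_eq_of_forall_le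
    (Set.image_subset_iff.2 fun s => paretoCurve_mem_attainS hη hβ hα0 hEmu0 hEun0 hT.le) hdom
    using 1
  · ext p
    simp only [Set.mem_ofPred_eq, maximal_iff_forall_gt, Prod.lt_iff, or_comm]
    grind
  · ext p
    simp [paretoCurve, eq_comm]

/-- Theorem 3 of the paper, Pareto boundary: if `U+G < T`, the set of
strong Pareto optimal points of the attainable set `S` is exactly
`{(V_mu(s), V_un(P-s)) : s ∈ [0,P]}`. -/
theorem moop_strong_pareto_boundary
    (U G : ℕ) (hU : 1 ≤ U) (hG : 1 ≤ G) (K : Fin G → ℕ) (hK : ∀ j, 1 ≤ K j)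
    (N : ℕ) (hN : 1 ≤ N) (T : ℕ) (hT : U + G < T)
    (P : ℝ) (hP : 0 < P)
    (η Emu : ∀ j : Fin G, Fin (K j) → ℝ) (β Eun α : Fin U → ℝ)
    (hη : ∀ j k, 0 < η j k) (hEmu : ∀ j k, 0 < Emu j k)
    (hβ : ∀ m, 0 < β m) (hEun : ∀ m, 0 < Eun m) (hα : ∀ m, 0 < α m) :
    {p : ℝ × ℝ | p ∈ attainS N T P η Emu β Eun α ∧
        ¬ ∃ q ∈ attainS N T P η Emu β Eun α,
          (p.1 ≤ q.1 ∧ p.2 < q.2) ∨ (p.1 < q.1 ∧ p.2 ≤ q.2)}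
      = {p : ℝ × ℝ | ∃ s ∈ Set.Icc (0 : ℝ) P,
          p = (VmuX N T P η Emu β Eun α s, VunX N T P η Emu β Eun α (P - s))} :=
  moop_strong_pareto_boundary_general U G hU hG K hK N hN T hT P η Emu β Eun α hη hEmu hβ hEun hα
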